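/- Let R, K_ℓ, K_R be smooth with R > 0 near a point ℓ*, set H = 2R'/R, θ⁺ = 2K_R + H, trK = K_ℓ + 2K_R, and suppose there is an EVEN integer j ≥ 2 with θ⁺(ℓ*) = ∂_ℓθ⁺(ℓ*) = ⋯ = ∂_ℓ^{j−1}θ⁺(ℓ*) = 0 and ∂_ℓ^{j}θ⁺(ℓ*) > 0. If k is a smooth solution of ∂_ℓ k = −K_ℓ k² − H k + trK near ℓ* with k(ℓ*) = −1, then ∂_ℓ k(ℓ*) = ⋯ = ∂_ℓ^{j} k(ℓ*) = 0 and ∂_ℓ^{j+1} k(ℓ*) > 0, and consequently there is ε > 0 with k(ℓ) < −1 for all ℓ ∈ (ℓ* − ε, ℓ*). -/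

import Mathlib

open Filter Asymptotics Set Topology

/-!
With `w = 1 + k`, the reduced Jang equation becomes the linear equation
`w' = (K_ℓ (1 - k) - H) w + θ⁺`. Differentiating it with the Leibniz rule, the vanishing of `θ⁺`
to order `j - 1` forces `w` to vanish to order `j` at `ℓ*`, and then `w⁽ʲ⁺¹⁾(ℓ*) = θ⁺⁽ʲ⁾(ℓ*) > 0`.
A function whose first nonzero derivative at a point has odd order and is positive is negative
just to the left of that point, i.e. `k < -1` there.
-/

/-- Mean curvature `H = 2 R' / R` of the spherically symmetric spheres. -/
noncomputable def Hf (R : ℝ → ℝ) : ℝ → ℝ := fun ℓ => 2 * deriv R ℓ / R ℓ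

/-- `trK = K_ℓ + 2 K_R`. -/
def trKf (Kl KR : ℝ → ℝ) : ℝ → ℝ := fun ℓ => Kl ℓ + 2 * KR ℓ

/-- Outer expansion `θ⁺ = 2 K_R + H`. -/
noncomputable def thetaPlus (R KR : ℝ → ℝ) : ℝ → ℝ := fun ℓ => 2 * KR ℓ + Hf R ℓ

section LinearODE

variable {𝕜 : Type*} [NontriviallyNormedField 𝕜] {a w θ : 𝕜 → 𝕜} {x : 𝕜} {n : ℕ}

theorem iteratedDeriv_fun_mul_eq_zero {f g : 𝕜 → 𝕜} (hg : ContDiffAt 𝕜 n g x)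
    (hf : ContDiffAt 𝕜 n f x) (hf0 : ∀ i ≤ n, iteratedDeriv i f x = 0) :
    iteratedDeriv n (fun y => g y * f y) x = 0 := by
  rw [iteratedDeriv_fun_mul hg hf]
  exact Finset.sum_eq_zero fun i _ => by rw [hf0 (n - i) (Nat.sub_le n i), mul_zero]

theorem iteratedDeriv_succ_eq_of_deriv_eq_mul_add
    (hode : deriv w =ᶠ[𝓝 x] fun y => a y * w y + θ y) (ha : ContDiffAt 𝕜 n a x)
    (hw : ContDiffAt 𝕜 n w x) (hθ : ContDiffAt 𝕜 n θ x)
    (hw0 : ∀ i ≤ n, iteratedDeriv i w x = 0) :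
    iteratedDeriv (n + 1) w x = iteratedDeriv n θ x := by
  rw [iteratedDeriv_succ', (hode.iteratedDeriv n).eq_of_nhds,
    iteratedDeriv_fun_add (ha.mul hw) hθ, iteratedDeriv_fun_mul_eq_zero ha hw hw0, zero_add]

theorem iteratedDeriv_eq_zero_of_deriv_eq_mul_add
    (hode : deriv w =ᶠ[𝓝 x] fun y => a y * w y + θ y) (ha : ContDiffAt 𝕜 n a x)
    (hw : ContDiffAt 𝕜 n w x) (hθ : ContDiffAt 𝕜 n θ x) (hwx : w x = 0)
    (hθ0 : ∀ i < n, iteratedDeriv i θ x = 0) :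
    ∀ i ≤ n, iteratedDeriv i w x = 0 := by
  induction n with
  | zero => simpa using hwx
  | succ n ih =>
    have hle : ((n : ℕ) : WithTop ℕ∞) ≤ (n + 1 : ℕ) := by exact_mod_cast n.le_succ
    have hw0 := ih (ha.of_le hle) (hw.of_le hle) (hθ.of_le hle) fun i hi => hθ0 i (by omega)
    intro i hi
    rcases Nat.le_succ_iff.mp hi with hi | rfl
    · exact hw0 i hi
    · rw [iteratedDeriv_succ_eq_of_deriv_eq_mul_add hode (ha.of_le hle) (hw.of_le hle)
        (hθ.of_le hle) hw0, hθ0 n n.lt_succ_self]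

end LinearODE

section LeftSign

theorem eventually_nhdsLT_pos_of_deriv_neg {f : ℝ → ℝ} {x : ℝ}
    (hf : ∀ᶠ y in 𝓝 x, DifferentiableAt ℝ f y) (hfx : f x = 0)
    (hf' : ∀ᶠ y in 𝓝[<] x, deriv f y < 0) :
    ∀ᶠ y in 𝓝[<] x, 0 < f y := by
  obtain ⟨l₁, u, ⟨hl₁, hxu⟩, hdiff⟩ := mem_nhds_iff_exists_Ioo_subset.mp hf
  obtain ⟨l₂, hl₂, hneg⟩ := mem_nhdsLT_iff_exists_Ioo_subset.mp hf'
  set l := max l₁ l₂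
  have hl : l < x := max_lt hl₁ hl₂
  have hanti : StrictAntiOn f (Ioc l x) := by
    refine strictAntiOn_of_deriv_neg (convex_Ioc l x) (fun y hy => ?_) (fun y hy => ?_)
    · exact (hdiff ⟨(le_max_left _ _).trans_lt hy.1, hy.2.trans_lt hxu⟩).continuousAt
        |>.continuousWithinAt
    · rw [interior_Ioc] at hy
      exact hneg ⟨(le_max_right _ _).trans_lt hy.1, hy.2⟩
  filter_upwards [Ioo_mem_nhdsLT hl] with y hy
  simpa [hfx] using hanti ⟨hy.1, hy.2.le⟩ ⟨hl, le_rfl⟩ hy.2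

theorem eventually_nhdsLT_neg_one_pow_mul_pos {f : ℝ → ℝ} {x : ℝ} {n : ℕ}
    (hf : ContDiffAt ℝ n f x) (hf0 : ∀ i < n, iteratedDeriv i f x = 0)
    (hfn : 0 < iteratedDeriv n f x) :
    ∀ᶠ y in 𝓝[<] x, 0 < (-1) ^ n * f y := by
  induction n generalizing f with
  | zero =>
    simp only [pow_zero, one_mul]
    exact nhdsWithin_le_nhds (hf.continuousAt.eventually (eventually_gt_nhds hfn))
  | succ n ih =>
    have hf'pos : ∀ᶠ y in 𝓝[<] x, 0 < (-1) ^ n * deriv f y := by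
      refine ih (hf.derivWithin le_rfl) (fun i hi => ?_) ?_ <;> rw [← iteratedDeriv_succ']
      exacts [hf0 (i + 1) (by omega), hfn]
    have hdiff : ∀ᶠ y in 𝓝 x, DifferentiableAt ℝ f y :=
      (hf.eventually (by simp)).mono fun y hy => hy.differentiableAt (by simp)
    refine eventually_nhdsLT_pos_of_deriv_neg (hdiff.mono fun y hy => hy.const_mul _)
      (by simpa using hf0 0 n.succ_pos) (hf'pos.mono fun y hy => ?_)
    rw [deriv_const_mul_field', pow_succ]
    linarith

end LeftSign

theorem contDiffAt_Hf {R : ℝ → ℝ} {x : ℝ} {n : WithTop ℕ∞} (hR : ContDiffAt ℝ (n + 1) R x)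
    (hRx : R x ≠ 0) : ContDiffAt ℝ n (Hf R) x :=
  (contDiffAt_const.mul (hR.derivWithin le_rfl)).div (hR.of_le le_self_add) hRx

theorem deriv_one_add_of_jang {R Kl KR k : ℝ → ℝ} {ℓ : ℝ}
    (hode : deriv k ℓ = -(Kl ℓ) * k ℓ ^ 2 - Hf R ℓ * k ℓ + trKf Kl KR ℓ) :
    deriv (fun y => 1 + k y) ℓ =
      (Kl ℓ * (1 - k ℓ) - Hf R ℓ) * (1 + k ℓ) + thetaPlus R KR ℓ := by
  rw [deriv_const_add, hode, thetaPlus, trKf]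
  ring

theorem jang_drops_below_left_of_even_order_mots_general (R Kl KR k : ℝ → ℝ) (U : Set ℝ)
    (hU : IsOpen U) (ℓs : ℝ) (hℓs : ℓs ∈ U)
    (hR : ContDiffOn ℝ (⊤ : ℕ∞) R U)
    (hKl : ContDiffOn ℝ (⊤ : ℕ∞) Kl U)
    (hKR : ContDiffOn ℝ (⊤ : ℕ∞) KR U)
    (hRpos : ∀ ℓ ∈ U, 0 < R ℓ)
    (j : ℕ) (hjeven : Even j)
    (hθlow : ∀ i < j, iteratedDeriv i (thetaPlus R KR) ℓs = 0)
    (hθj : 0 < iteratedDeriv j (thetaPlus R KR) ℓs)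
    (hk : ContDiffOn ℝ (⊤ : ℕ∞) k U)
    (hode : ∀ ℓ ∈ U, deriv k ℓ = -(Kl ℓ) * k ℓ ^ 2 - Hf R ℓ * k ℓ + trKf Kl KR ℓ)
    (hkval : k ℓs = -1) :
    (∀ i, 1 ≤ i → i ≤ j → iteratedDeriv i k ℓs = 0) ∧
    0 < iteratedDeriv (j + 1) k ℓs ∧
    ∃ ε > 0, ∀ ℓ ∈ Set.Ioo (ℓs - ε) ℓs, k ℓ < -1 := by
  have hUx : U ∈ 𝓝 ℓs := hU.mem_nhds hℓs
  have hsmooth {f : ℝ → ℝ} (hf : ContDiffOn ℝ (⊤ : ℕ∞) f U) (n : ℕ) : ContDiffAt ℝ n f ℓs :=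
    (hf.contDiffAt hUx).of_le (by exact_mod_cast le_top)
  have hH (n : ℕ) : ContDiffAt ℝ n (Hf R) ℓs :=
    contDiffAt_Hf (by exact_mod_cast hsmooth hR (n + 1)) (hRpos ℓs hℓs).ne'
  set w : ℝ → ℝ := fun ℓ => 1 + k ℓ
  set a : ℝ → ℝ := fun ℓ => Kl ℓ * (1 - k ℓ) - Hf R ℓ
  have hode_w : deriv w =ᶠ[𝓝 ℓs] fun ℓ => a ℓ * w ℓ + thetaPlus R KR ℓ := by
    filter_upwards [hUx] with ℓ hℓ using deriv_one_add_of_jang (hode ℓ hℓ)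
  have ha : ContDiffAt ℝ j a ℓs :=
    (hsmooth hKl j |>.mul (contDiffAt_const.sub (hsmooth hk j))).sub (hH j)
  have hθ : ContDiffAt ℝ j (thetaPlus R KR) ℓs := (contDiffAt_const.mul (hsmooth hKR j)).add (hH j)
  have hw (n : ℕ) : ContDiffAt ℝ n w ℓs := contDiffAt_const.add (hsmooth hk n)
  have hw0 := iteratedDeriv_eq_zero_of_deriv_eq_mul_add hode_w ha (hw j) hθ
    (by simp [w, hkval]) hθlow
  have hwj := iteratedDeriv_succ_eq_of_deriv_eq_mul_add hode_w ha (hw j) hθ hw0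
  have hkw {i : ℕ} (hi : 0 < i) : iteratedDeriv i k ℓs = iteratedDeriv i w ℓs :=
    (iteratedDeriv_const_add hi 1).symm
  refine ⟨fun i hi hij => hkw hi ▸ hw0 i hij, hkw j.succ_pos ▸ hwj ▸ hθj, ?_⟩
  have hleft := eventually_nhdsLT_neg_one_pow_mul_pos (hw (j + 1))
    (fun i hi => hw0 i (Nat.lt_succ_iff.mp hi)) (hwj ▸ hθj)
  obtain ⟨l, hl, hsub⟩ := mem_nhdsLT_iff_exists_Ioo_subset.mp hleft
  refine ⟨ℓs - l, sub_pos.mpr hl, fun ℓ hℓ => ?_⟩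
  have hneg : 0 < (-1) ^ (j + 1) * (1 + k ℓ) := hsub ⟨by linarith [hℓ.1], hℓ.2⟩
  rw [hjeven.add_one.neg_one_pow] at hneg
  linarith

/-- At a MOTS `ℓ*` where `θ⁺` vanishes to order `j − 1` and `∂_ℓ^j θ⁺(ℓ*) > 0` for
an EVEN `j ≥ 2`, any smooth solution `k` of the reduced Jang equation near `ℓ*` with
`k(ℓ*) = −1` has `∂_ℓ k(ℓ*) = ⋯ = ∂_ℓ^j k(ℓ*) = 0` and `∂_ℓ^{j+1} k(ℓ*) > 0`;
consequently `k < −1` just to the left of `ℓ*`. -/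
theorem jang_drops_below_left_of_even_order_mots (R Kl KR k : ℝ → ℝ) (U : Set ℝ)
    (hU : IsOpen U) (ℓs : ℝ) (hℓs : ℓs ∈ U)
    (hR : ContDiffOn ℝ (⊤ : ℕ∞) R U)
    (hKl : ContDiffOn ℝ (⊤ : ℕ∞) Kl U)
    (hKR : ContDiffOn ℝ (⊤ : ℕ∞) KR U)
    (hRpos : ∀ ℓ ∈ U, 0 < R ℓ)
    (j : ℕ) (hj : 2 ≤ j) (hjeven : Even j)
    (hθlow : ∀ i < j, iteratedDeriv i (thetaPlus R KR) ℓs = 0)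
    (hθj : 0 < iteratedDeriv j (thetaPlus R KR) ℓs)
    (hk : ContDiffOn ℝ (⊤ : ℕ∞) k U)
    (hode : ∀ ℓ ∈ U, deriv k ℓ = -(Kl ℓ) * k ℓ ^ 2 - Hf R ℓ * k ℓ + trKf Kl KR ℓ)
    (hkval : k ℓs = -1) :
    (∀ i, 1 ≤ i → i ≤ j → iteratedDeriv i k ℓs = 0) ∧
    0 < iteratedDeriv (j + 1) k ℓs ∧
    ∃ ε > 0, ∀ ℓ ∈ Set.Ioo (ℓs - ε) ℓs, k ℓ < -1 :=
  jang_drops_below_left_of_even_order_mots_general R Kl KR k U hU ℓs hℓs hR hKl hKR hRpos j hjeven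
    hθlow hθj hk hode hkval
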